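/- arXiv:0709.2662 — 3 statements merged into one kernel-verified Lean document; each statement's English description precedes it below -/
import Mathlib

section
/- Let (Ω, F, P) be a probability space. Let (B_i)_{i∈ℕ} and (B_i*)_{i∈ℕ} be σ-algebras with B_i ⊆ B_i* for all i, such that (B_i) increases to B_∞ and (B_i*) decreases to B_∞*, and assume B_∞ = B_∞* modulo P (they contain the same events up to P-null sets). Then for every φ ∈ L¹(P), lim_{i→∞} sup_{C_i : B_i ⊆ C_i ⊆ B_i*} ‖E[φ | C_i] − E[φ | B_∞]‖_{L¹(P)} = 0. -/
open MeasureTheory Filter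

/-- Two σ-algebras coincide modulo `P`: each event of one differs from an event of the
other by a `P`-null set. -/
def EqModP {Ω : Type*} {mΩ : MeasurableSpace Ω} (P : MeasureTheory.Measure Ω)
    (m₁ m₂ : MeasurableSpace Ω) : Prop :=
  (∀ s, MeasurableSet[m₁] s → ∃ t, MeasurableSet[m₂] t ∧ P (symmDiff s t) = 0) ∧
  (∀ s, MeasurableSet[m₂] s → ∃ t, MeasurableSet[m₁] t ∧ P (symmDiff s t) = 0)

open Topology
open scoped ENNReal

/-!
Lévy's upward theorem gives `E[φ|B_i] → E[φ|B_∞]` in `L¹`. For the decreasing family, on `L²`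
the conditional expectations `E[·|B_i*]` are the orthogonal projections onto the decreasing
closed subspaces `L²(B_i*)`, whose intersection is `L²(B_∞*)`; projections onto a decreasing
family converge strongly to the projection onto the intersection (pass to orthogonal
complements, which increase). Since `L²` is dense in `L¹` and conditional expectations are
`L¹`-contractions, `E[φ|B_i*] → E[φ|B_∞*]` in `L¹`, and `E[φ|B_∞*] = E[φ|B_∞]` because the two
σ-algebras agree modulo `P`. Finally, for `B_i ⊆ C ⊆ B_i*` we have
`E[φ|C] - E[φ|B_i] = E[E[φ|B_i*] - E[φ|B_i] | C]`, so
`‖E[φ|C] - E[φ|B_∞]‖₁ ≤ ‖E[φ|B_i*] - E[φ|B_∞]‖₁ + 2 ‖E[φ|B_i] - E[φ|B_∞]‖₁` uniformly in `C`.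
-/

namespace Submodule

variable {𝕜 E : Type*} [RCLike 𝕜] [NormedAddCommGroup E] [InnerProductSpace 𝕜 E] [CompleteSpace E]

theorem starProjection_tendsto_iInf {ι : Type*} [Preorder ι] (U : ι → Submodule 𝕜 E)
    [∀ i, (U i).HasOrthogonalProjection] [(⨅ i, U i).HasOrthogonalProjection]
    (hU : Antitone U) (x : E) :
    Tendsto (fun i => (U i).starProjection x) atTop (𝓝 ((⨅ i, U i).starProjection x)) := by
  have hclosure : (⨆ i, (U i)ᗮ).topologicalClosure = (⨅ i, U i)ᗮ := by
    rw [← orthogonal_orthogonal_eq_closure, ← iInf_orthogonal]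
    simp only [orthogonal_orthogonal]
  have : (⨆ i, (U i)ᗮ).topologicalClosure.HasOrthogonalProjection := hclosure ▸ inferInstance
  have hcompl := starProjection_tendsto_closure_iSup (fun i => (U i)ᗮ)
    (fun i j hij => orthogonal_le (hU hij)) x
  simp only [hclosure, starProjection_orthogonal_val] at hcompl
  simpa only [sub_sub_cancel] using (tendsto_const_nhds (x := x)).sub hcompl

end Submodule

namespace MeasureTheory

variable {Ω : Type*}

theorem AEStronglyMeasurable.iInf_of_antitone {m0 : MeasurableSpace Ω} {μ : Measure Ω}
    {E : Type*} [NormedAddCommGroup E] [CompleteSpace E] [SecondCountableTopology E]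
    {m : ℕ → MeasurableSpace Ω} (hm : Antitone m) {f : Ω → E}
    (hf : ∀ i, AEStronglyMeasurable[m i] f μ) : AEStronglyMeasurable[⨅ i, m i] f μ := by
  choose g hg hfg using hf
  -- `limUnder` ignores any finite prefix of the `m i`-measurable versions `g i` of `f`,
  -- so it is measurable for every `m j`.
  refine ⟨fun x => limUnder atTop (g · x), ?_, ?_⟩
  · borelize E
    have hmeas : ∀ j, Measurable[m j] fun x => limUnder atTop (g · x) := fun j => by
      have hshift : (fun x => limUnder atTop (g · x)) =
          fun x => limUnder atTop (fun n => g (n + j) x) := by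
        funext x
        rw [show (fun n => g (n + j) x) = (g · x) ∘ (· + j) from rfl, limUnder, limUnder,
          ← Filter.map_map, Filter.map_add_atTop_eq_nat]
      have h : StronglyMeasurable[m j] fun x => limUnder atTop (fun n => g (n + j) x) :=
        @StronglyMeasurable.limUnder ℕ Ω E (m j) _ _ atTop _ _ _ _
          fun n => (hg (n + j)).mono (hm le_add_self)
      rw [hshift]
      exact h.measurable
    exact stronglyMeasurable_iff_measurable.2 fun s hs =>
      MeasurableSpace.measurableSet_iInf.2 fun j => hmeas j hs
  · filter_upwards [ae_all_iff.2 hfg] with x hx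
    simp only [← hx, tendsto_const_nhds.limUnder_eq]

theorem lpMeas_mono {F 𝕜 : Type*} [RCLike 𝕜] [NormedAddCommGroup F] [NormedSpace 𝕜 F]
    {p : ℝ≥0∞} {m m' m0 : MeasurableSpace Ω} {μ : Measure Ω} (hm : m ≤ m') :
    lpMeas F 𝕜 m p μ ≤ lpMeas F 𝕜 m' p μ := fun _ hf =>
  mem_lpMeas_iff_aestronglyMeasurable.2 ((mem_lpMeas_iff_aestronglyMeasurable.1 hf).mono hm)

theorem lpMeas_iInf_of_antitone {F 𝕜 : Type*} [RCLike 𝕜] [NormedAddCommGroup F]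
    [NormedSpace 𝕜 F] [CompleteSpace F] [SecondCountableTopology F] {p : ℝ≥0∞}
    {m0 : MeasurableSpace Ω} {μ : Measure Ω} {m : ℕ → MeasurableSpace Ω} (hm : Antitone m) :
    lpMeas F 𝕜 (⨅ i, m i) p μ = ⨅ i, lpMeas F 𝕜 (m i) p μ := by
  refine le_antisymm (le_iInf fun i => lpMeas_mono (iInf_le m i)) fun f hf => ?_
  simp only [Submodule.mem_iInf, mem_lpMeas_iff_aestronglyMeasurable] at hf ⊢
  exact AEStronglyMeasurable.iInf_of_antitone hm hf

theorem condExp_ae_eq_of_le_of_forall_ae_eq_set {m₁ m₂ m0 : MeasurableSpace Ω} {μ : Measure Ω}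
    [IsFiniteMeasure μ] (hm₁₂ : m₁ ≤ m₂) (hm₂ : m₂ ≤ m0)
    (h : ∀ s, MeasurableSet[m₂] s → ∃ t, MeasurableSet[m₁] t ∧ s =ᵐ[μ] t)
    {φ : Ω → ℝ} (hφ : Integrable φ μ) : μ[φ|m₂] =ᵐ[μ] μ[φ|m₁] := by
  refine (ae_eq_condExp_of_forall_setIntegral_eq hm₂ hφ
    (fun s _ _ => integrable_condExp.integrableOn) (fun s hs _ => ?_)
    (stronglyMeasurable_condExp.aestronglyMeasurable.mono hm₁₂)).symm
  obtain ⟨t, ht, hst⟩ := h s hs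
  rw [setIntegral_congr_set hst, setIntegral_congr_set hst,
    setIntegral_condExp (hm₁₂.trans hm₂) hφ ht]

theorem eLpNorm_condExp_sub_condExp_le {m₁ m m₂ m0 : MeasurableSpace Ω} {μ : Measure Ω}
    [IsFiniteMeasure μ] (hm₁ : m₁ ≤ m) (hm₂ : m ≤ m₂) (hm₂0 : m₂ ≤ m0) {p : ℝ≥0∞} (hp : 1 ≤ p)
    (φ : Ω → ℝ) :
    eLpNorm (μ[φ|m] - μ[φ|m₁]) p μ ≤ eLpNorm (μ[φ|m₂] - μ[φ|m₁]) p μ := by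
  have hm0 : m ≤ m0 := hm₂.trans hm₂0
  have hcond : μ[φ|m] - μ[φ|m₁] =ᵐ[μ] μ[μ[φ|m₂] - μ[φ|m₁]|m] := by
    have hfix : μ[μ[φ|m₁]|m] = μ[φ|m₁] :=
      condExp_of_stronglyMeasurable hm0 (stronglyMeasurable_condExp.mono hm₁) integrable_condExp
    filter_upwards [condExp_condExp_of_le (f := φ) (μ := μ) hm₂ hm₂0,
      condExp_sub (integrable_condExp (m := m₂) (f := φ)) integrable_condExp m]
      with x htower hsub
    rw [hsub, Pi.sub_apply, Pi.sub_apply, htower, hfix]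
  rw [eLpNorm_congr_ae hcond]
  exact eLpNorm_condExp_le_eLpNorm (μ[φ|m₂] - μ[φ|m₁]) hp

theorem eLpNorm_condExp_sub_le_of_le_of_le {m₁ m m₂ m0 : MeasurableSpace Ω} {μ : Measure Ω}
    [IsFiniteMeasure μ] (hm₁ : m₁ ≤ m) (hm₂ : m ≤ m₂) (hm₂0 : m₂ ≤ m0) {p : ℝ≥0∞} (hp : 1 ≤ p)
    (φ : Ω → ℝ) {g : Ω → ℝ} (hg : AEStronglyMeasurable g μ) :
    eLpNorm (μ[φ|m] - g) p μ ≤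
      eLpNorm (μ[φ|m₂] - g) p μ + 2 * eLpNorm (μ[φ|m₁] - g) p μ := by
  have hasm : ∀ ψ : Ω → ℝ, Integrable ψ μ → AEStronglyMeasurable (ψ - g) μ := fun _ hψ =>
    hψ.aestronglyMeasurable.sub hg
  calc eLpNorm (μ[φ|m] - g) p μ
      = eLpNorm ((μ[φ|m] - μ[φ|m₁]) + (μ[φ|m₁] - g)) p μ := by rw [sub_add_sub_cancel]
    _ ≤ eLpNorm (μ[φ|m] - μ[φ|m₁]) p μ + eLpNorm (μ[φ|m₁] - g) p μ :=
        eLpNorm_add_le (integrable_condExp.sub integrable_condExp).aestronglyMeasurable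
          (hasm _ integrable_condExp) hp
    _ ≤ eLpNorm (μ[φ|m₂] - μ[φ|m₁]) p μ + eLpNorm (μ[φ|m₁] - g) p μ := by
        gcongr
        exact eLpNorm_condExp_sub_condExp_le hm₁ hm₂ hm₂0 hp φ
    _ = eLpNorm ((μ[φ|m₂] - g) - (μ[φ|m₁] - g)) p μ + eLpNorm (μ[φ|m₁] - g) p μ := by
        rw [sub_sub_sub_cancel_right]
    _ ≤ eLpNorm (μ[φ|m₂] - g) p μ + eLpNorm (μ[φ|m₁] - g) p μ
          + eLpNorm (μ[φ|m₁] - g) p μ := by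
        gcongr
        exact eLpNorm_sub_le (hasm _ integrable_condExp) (hasm _ integrable_condExp) hp
    _ = eLpNorm (μ[φ|m₂] - g) p μ + 2 * eLpNorm (μ[φ|m₁] - g) p μ := by
        rw [add_assoc, two_mul]

theorem tendsto_eLpNorm_condExp_sub_of_forall_memLp_two {ι : Type*} {l : Filter ι}
    {m : ι → MeasurableSpace Ω} {m' m0 : MeasurableSpace Ω} {μ : Measure Ω} [IsFiniteMeasure μ]
    (h : ∀ ψ : Ω → ℝ, MemLp ψ 2 μ → Tendsto (fun i => eLpNorm (μ[ψ|m i] - μ[ψ|m']) 1 μ) l (𝓝 0))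
    {φ : Ω → ℝ} (hφ : Integrable φ μ) :
    Tendsto (fun i => eLpNorm (μ[φ|m i] - μ[φ|m']) 1 μ) l (𝓝 0) := by
  refine ENNReal.tendsto_nhds_zero.2 fun ε hε => ?_
  have hε3 : 0 < ε / 3 := ENNReal.div_pos hε.ne' ENNReal.ofNat_ne_top
  obtain ⟨ψ, hφψ, -⟩ :=
    (memLp_one_iff_integrable.2 hφ).exists_simpleFunc_eLpNorm_sub_lt ENNReal.one_ne_top hε3.ne'
  have hψ : Integrable ψ μ := ψ.integrable_of_isFiniteMeasure
  filter_upwards [ENNReal.tendsto_nhds_zero.1 (h ψ (ψ.memLp_of_isFiniteMeasure 2 μ)) _ hε3]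
    with i hi
  have hsplit : μ[φ|m i] - μ[φ|m'] =ᵐ[μ]
      μ[φ - ⇑ψ|m i] + (μ[⇑ψ|m i] - μ[⇑ψ|m']) - μ[φ - ⇑ψ|m'] := by
    filter_upwards [condExp_sub hφ hψ (m i), condExp_sub hφ hψ m'] with x h₁ h₂
    simp only [Pi.add_apply, Pi.sub_apply, h₁, h₂]
    ring
  calc eLpNorm (μ[φ|m i] - μ[φ|m']) 1 μ
      = eLpNorm (μ[φ - ⇑ψ|m i] + (μ[⇑ψ|m i] - μ[⇑ψ|m']) - μ[φ - ⇑ψ|m']) 1 μ :=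
        eLpNorm_congr_ae hsplit
    _ ≤ eLpNorm (μ[φ - ⇑ψ|m i]) 1 μ + eLpNorm (μ[⇑ψ|m i] - μ[⇑ψ|m']) 1 μ
          + eLpNorm (μ[φ - ⇑ψ|m']) 1 μ := by
        refine (eLpNorm_sub_le ?_ integrable_condExp.aestronglyMeasurable le_rfl).trans ?_
        · exact (integrable_condExp.add
            (integrable_condExp.sub integrable_condExp)).aestronglyMeasurable
        gcongr
        exact eLpNorm_add_le integrable_condExp.aestronglyMeasurable
          (integrable_condExp.sub integrable_condExp).aestronglyMeasurable le_rfl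
    _ ≤ ε / 3 + ε / 3 + ε / 3 := by
        gcongr <;> exact (eLpNorm_condExp_le_eLpNorm _ le_rfl).trans hφψ.le
    _ = ε := ENNReal.add_thirds ε

theorem tendsto_eLpNorm_two_condExp_iInf {m : ℕ → MeasurableSpace Ω} {m0 : MeasurableSpace Ω}
    {μ : Measure Ω} [IsFiniteMeasure μ] (hm0 : ∀ i, m i ≤ m0) (hm : Antitone m)
    {φ : Ω → ℝ} (hφ : MemLp φ 2 μ) :
    Tendsto (fun i => eLpNorm (μ[φ|m i] - μ[φ|⨅ i, m i]) 2 μ) atTop (𝓝 0) := by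
  have hinf : ⨅ i, m i ≤ m0 := (iInf_le m 0).trans (hm0 0)
  have : ∀ i, Fact (m i ≤ m0) := fun i => ⟨hm0 i⟩
  have : Fact (⨅ i, m i ≤ m0) := ⟨hinf⟩
  have : (⨅ i, lpMeas ℝ ℝ (m i) 2 μ).HasOrthogonalProjection :=
    lpMeas_iInf_of_antitone (F := ℝ) (𝕜 := ℝ) (p := 2) (μ := μ) hm ▸ inferInstance
  have hproj := Submodule.starProjection_tendsto_iInf (fun i => lpMeas ℝ ℝ (m i) 2 μ)
    (fun i j hij => lpMeas_mono (hm hij)) (hφ.toLp φ)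
  simp only [← lpMeas_iInf_of_antitone (F := ℝ) (𝕜 := ℝ) (p := 2) (μ := μ) hm] at hproj
  -- `condExpL2` is by construction the orthogonal projection onto `lpMeas`
  change Tendsto (fun i => (condExpL2 ℝ ℝ (hm0 i) (hφ.toLp φ) : Ω →₂[μ] ℝ)) atTop
    (𝓝 (condExpL2 ℝ ℝ hinf (hφ.toLp φ) : Ω →₂[μ] ℝ)) at hproj
  refine ((Lp.tendsto_Lp_iff_tendsto_eLpNorm' _ _).1 hproj).congr fun i => eLpNorm_congr_ae ?_
  exact (hφ.condExpL2_ae_eq_condExp (hm0 i)).sub (hφ.condExpL2_ae_eq_condExp hinf)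

theorem tendsto_eLpNorm_condExp_iInf {m : ℕ → MeasurableSpace Ω} {m0 : MeasurableSpace Ω}
    {μ : Measure Ω} [IsFiniteMeasure μ] (hm0 : ∀ i, m i ≤ m0) (hm : Antitone m)
    {φ : Ω → ℝ} (hφ : Integrable φ μ) :
    Tendsto (fun i => eLpNorm (μ[φ|m i] - μ[φ|⨅ i, m i]) 1 μ) atTop (𝓝 0) := by
  refine tendsto_eLpNorm_condExp_sub_of_forall_memLp_two (fun ψ hψ => ?_) hφ
  have hL2 := ENNReal.Tendsto.mul_const (tendsto_eLpNorm_two_condExp_iInf hm0 hm hψ)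
    (b := μ Set.univ ^ (1 / (1 : ℝ≥0∞).toReal - 1 / (2 : ℝ≥0∞).toReal))
    (.inr (ENNReal.rpow_ne_top_of_nonneg (by norm_num) (measure_ne_top μ _)))
  rw [zero_mul] at hL2
  exact tendsto_of_tendsto_of_tendsto_of_le_of_le tendsto_const_nhds hL2 (fun _ => zero_le)
    fun i => eLpNorm_le_eLpNorm_mul_rpow_measure_univ one_le_two
      (integrable_condExp.sub integrable_condExp).aestronglyMeasurable

end MeasureTheory

theorem condexp_sandwich_L1_convergence {Ω : Type*} [m0 : MeasurableSpace Ω]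
    (P : Measure Ω) [IsProbabilityMeasure P]
    (B Bstar : ℕ → MeasurableSpace Ω) (Binf Bstarinf : MeasurableSpace Ω)
    (hBBstar : ∀ i, B i ≤ Bstar i) (hBstar : ∀ i, Bstar i ≤ m0)
    (hmono : Monotone B) (hanti : Antitone Bstar)
    (hBinf : Binf = ⨆ i, B i) (hBstarinf : Bstarinf = ⨅ i, Bstar i)
    (hmod : EqModP P Binf Bstarinf)
    (φ : Ω → ℝ) (hφ : Integrable φ P) :
    Tendsto
      (fun i => ⨆ C ∈ {C : MeasurableSpace Ω | B i ≤ C ∧ C ≤ Bstar i},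
        eLpNorm (P[φ|C] - P[φ|Binf]) 1 P)
      atTop (nhds 0) := by
  subst hBinf hBstarinf
  have hB : ∀ i, B i ≤ m0 := fun i => (hBBstar i).trans (hBstar i)
  have hsup_le_inf : ⨆ i, B i ≤ ⨅ i, Bstar i := iSup_le fun j => le_iInf fun i =>
    (le_total i j).elim (fun hij => (hBBstar j).trans (hanti hij))
      (fun hji => (hmono hji).trans (hBBstar i))
  have hlim : P[φ|⨅ i, Bstar i] =ᵐ[P] P[φ|⨆ i, B i] :=
    condExp_ae_eq_of_le_of_forall_ae_eq_set hsup_le_inf ((iInf_le Bstar 0).trans (hBstar 0))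
      (fun s hs => (hmod.2 s hs).imp fun _ ht => ⟨ht.1, measure_symmDiff_eq_zero_iff.1 ht.2⟩) hφ
  have hdown : Tendsto (fun i => eLpNorm (P[φ|Bstar i] - P[φ|⨆ i, B i]) 1 P) atTop (𝓝 0) :=
    (tendsto_eLpNorm_condExp_iInf hBstar hanti hφ).congr fun i =>
      eLpNorm_congr_ae (EventuallyEq.rfl.sub hlim)
  have hup : Tendsto (fun i => eLpNorm (P[φ|B i] - P[φ|⨆ i, B i]) 1 P) atTop (𝓝 0) :=
    tendsto_eLpNorm_condExp (ℱ := ⟨B, hmono, hB⟩) φ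
  have hbound := hdown.add (ENNReal.Tendsto.const_mul hup (a := 2) (.inr ENNReal.ofNat_ne_top))
  rw [mul_zero, add_zero] at hbound
  exact tendsto_of_tendsto_of_tendsto_of_le_of_le tendsto_const_nhds hbound (fun _ => zero_le)
    fun i => iSup₂_le fun C hC => eLpNorm_condExp_sub_le_of_le_of_le hC.1 hC.2 (hBstar i) le_rfl φ
      integrable_condExp.aestronglyMeasurable
end

section
/- Let I be a real interval, let l(x) = λx + a be a linear function with slope λ satisfying 0 ≤ λ ≤ 1, let B_k (k ∈ ℕ) be the blowups of the graph of l restricted to I (i.e. the graph of x ↦ λx + ka over kI), and let L_k be the lattice approximation of B_k. Then lim_{k→∞} |L_k| / length(B_k) = 1/√(1 + λ²), where |L_k| is the number of lattice points of L_k and length(B_k) is the Euclidean length of the segment B_k. -/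
/-!
STATEMENT 17: let `l(x) = λx + a` with `0 ≤ λ ≤ 1`, let `B_k` be the blowup by factor `k`
of the graph of `l` restricted to the interval `I = [x₀, x₁]` (i.e. the graph of
`x ↦ λx + ka` over `[kx₀, kx₁]`), and let `L_k` be its lattice approximation.
Then `|L_k| / length(B_k) → 1/√(1+λ²)` as `k → ∞`.
-/

/-- Lattice approximation of the graph of `x ↦ λx + a` over `U ⊆ ℤ`. -/
noncomputable def latticeApprox (lam a : ℝ) (U : Set ℤ) : Set (ℤ × ℤ) :=
  (fun z : ℤ => ((z, ⌊lam * (z : ℝ) + a⌋) : ℤ × ℤ)) '' U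

/-- Euclidean distance between two points of the plane. -/
noncomputable def elen (u w : ℝ × ℝ) : ℝ :=
  Real.sqrt ((w.1 - u.1) ^ 2 + (w.2 - u.2) ^ 2)

theorem latticeApprox_card_div_length (lam a x₀ x₁ : ℝ)
    (hlam0 : 0 ≤ lam) (hlam1 : lam ≤ 1) (hx : x₀ < x₁) :
    Filter.Tendsto
      (fun k : ℕ =>
        ((latticeApprox lam ((k : ℝ) * a)
            {z : ℤ | (k : ℝ) * x₀ ≤ (z : ℝ) ∧ (z : ℝ) ≤ (k : ℝ) * x₁}).ncard : ℝ) /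
          elen ((k : ℝ) * x₀, lam * ((k : ℝ) * x₀) + (k : ℝ) * a)
               ((k : ℝ) * x₁, lam * ((k : ℝ) * x₁) + (k : ℝ) * a))
      Filter.atTop (nhds (1 / Real.sqrt (1 + lam ^ 2))) := by
  have hd : (0:ℝ) < x₁ - x₀ := by linarith
  set c := Real.sqrt (1 + lam ^ 2) with hc
  have hcpos : 0 < c := Real.sqrt_pos.mpr (by positivity)
  -- length computation
  have helen : ∀ k : ℕ,
      elen ((k : ℝ) * x₀, lam * ((k : ℝ) * x₀) + (k : ℝ) * a)
           ((k : ℝ) * x₁, lam * ((k : ℝ) * x₁) + (k : ℝ) * a)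
        = (k : ℝ) * (x₁ - x₀) * c := by
    intro k
    have hk0 : (0:ℝ) ≤ (k : ℝ) * (x₁ - x₀) := by positivity
    have heq : ((k:ℝ) * x₁ - (k:ℝ) * x₀) ^ 2 +
        ((lam * ((k:ℝ) * x₁) + (k:ℝ) * a) - (lam * ((k:ℝ) * x₀) + (k:ℝ) * a)) ^ 2
        = ((k:ℝ) * (x₁ - x₀)) ^ 2 * (1 + lam ^ 2) := by ring
    rw [elen]
    simp only []
    rw [heq, Real.sqrt_mul (sq_nonneg _), Real.sqrt_sq hk0, hc]
  -- cardinality computation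
  have hcount : ∀ k : ℕ,
      ((latticeApprox lam ((k : ℝ) * a)
          {z : ℤ | (k : ℝ) * x₀ ≤ (z : ℝ) ∧ (z : ℝ) ≤ (k : ℝ) * x₁}).ncard : ℝ)
        = ((⌊(k:ℝ) * x₁⌋ + 1 - ⌈(k:ℝ) * x₀⌉).toNat : ℝ) := by
    intro k
    have hinj : Function.Injective
        (fun z : ℤ => ((z, ⌊lam * (z : ℝ) + (k : ℝ) * a⌋) : ℤ × ℤ)) := by
      intro z w h
      simpa using congrArg Prod.fst h
    have hset : {z : ℤ | (k : ℝ) * x₀ ≤ (z : ℝ) ∧ (z : ℝ) ≤ (k : ℝ) * x₁}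
        = ↑(Finset.Icc ⌈(k:ℝ) * x₀⌉ ⌊(k:ℝ) * x₁⌋) := by
      ext z
      simp [Int.ceil_le, Int.le_floor, and_comm]
    rw [latticeApprox, Set.ncard_image_of_injective _ hinj, hset,
      Set.ncard_coe_finset, Int.card_Icc]
  -- squeeze
  obtain ⟨K, hK⟩ := exists_nat_ge (1 / (x₁ - x₀))
  have hlim0 : Filter.Tendsto (fun k : ℕ => (1:ℝ) / k) Filter.atTop (nhds 0) :=
    tendsto_one_div_atTop_nhds_zero_nat
  have hlo : Filter.Tendsto (fun k : ℕ => 1 / c - (2 / ((x₁ - x₀) * c)) * (1 / k))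
      Filter.atTop (nhds (1 / c)) := by
    have := (hlim0.const_mul (2 / ((x₁ - x₀) * c))).const_sub (1 / c)
    simpa using this
  have hhi : Filter.Tendsto (fun k : ℕ => 1 / c + (2 / ((x₁ - x₀) * c)) * (1 / k))
      Filter.atTop (nhds (1 / c)) := by
    have := (hlim0.const_mul (2 / ((x₁ - x₀) * c))).const_add (1 / c)
    simpa using this
  refine tendsto_of_tendsto_of_tendsto_of_le_of_le' hlo hhi ?_ ?_
  · filter_upwards [Filter.eventually_ge_atTop (K + 1)] with k hk
    have hk1 : (1:ℝ) ≤ k := by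
      have : (1:ℕ) ≤ k := le_trans (Nat.le_add_left 1 K) hk
      exact_mod_cast this
    have hk0 : (k:ℝ) ≠ 0 := by positivity
    have hkd : (1:ℝ) ≤ (k:ℝ) * (x₁ - x₀) := by
      have hKk : (K:ℝ) ≤ k := by exact_mod_cast le_trans (Nat.le_succ K) hk
      have : 1 / (x₁ - x₀) ≤ (k:ℝ) := le_trans hK hKk
      calc (1:ℝ) = (1 / (x₁ - x₀)) * (x₁ - x₀) := by field_simp
        _ ≤ (k:ℝ) * (x₁ - x₀) := by nlinarith
    have hkdc : 0 < (k:ℝ) * (x₁ - x₀) * c := by nlinarith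
    have hNnn : (0:ℤ) ≤ ⌊(k:ℝ) * x₁⌋ + 1 - ⌈(k:ℝ) * x₀⌉ := by
      have h1 : ⌈(k:ℝ) * x₀⌉ ≤ ⌊(k:ℝ) * x₀⌋ + 1 := Int.ceil_le_floor_add_one _
      have h2 : ⌊(k:ℝ) * x₀⌋ ≤ ⌊(k:ℝ) * x₁⌋ := by
        apply Int.floor_le_floor
        nlinarith
      omega
    have hNval : ((⌊(k:ℝ) * x₁⌋ + 1 - ⌈(k:ℝ) * x₀⌉).toNat : ℝ)
        = ((⌊(k:ℝ) * x₁⌋ : ℝ) + 1 - (⌈(k:ℝ) * x₀⌉ : ℝ)) := by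
      have := Int.toNat_of_nonneg hNnn
      exact_mod_cast congrArg (fun z : ℤ => (z : ℝ)) this
    have hfl1 : (k:ℝ) * x₁ - 1 ≤ (⌊(k:ℝ) * x₁⌋ : ℝ) := by
      linarith [Int.sub_one_lt_floor ((k:ℝ) * x₁)]
    have hfl2 : (⌊(k:ℝ) * x₁⌋ : ℝ) ≤ (k:ℝ) * x₁ := Int.floor_le _
    have hce1 : (k:ℝ) * x₀ ≤ (⌈(k:ℝ) * x₀⌉ : ℝ) := Int.le_ceil _
    have hce2 : (⌈(k:ℝ) * x₀⌉ : ℝ) ≤ (k:ℝ) * x₀ + 1 := by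
      linarith [Int.ceil_lt_add_one ((k:ℝ) * x₀)]
    have e1 : (1 / c) * ((k:ℝ) * (x₁ - x₀) * c) = (k:ℝ) * (x₁ - x₀) := by
      field_simp
    have e2 : (2 / ((x₁ - x₀) * c)) * (1 / (k:ℝ)) * ((k:ℝ) * (x₁ - x₀) * c) = 2 := by
      field_simp
    rw [hcount k, helen k, hNval]
    rw [le_div_iff₀ hkdc]
    nlinarith [e1, e2, hfl1, hce2]
  · filter_upwards [Filter.eventually_ge_atTop (K + 1)] with k hk
    have hk1 : (1:ℝ) ≤ k := by
      have : (1:ℕ) ≤ k := le_trans (Nat.le_add_left 1 K) hk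
      exact_mod_cast this
    have hk0 : (k:ℝ) ≠ 0 := by positivity
    have hkd : (1:ℝ) ≤ (k:ℝ) * (x₁ - x₀) := by
      have hKk : (K:ℝ) ≤ k := by exact_mod_cast le_trans (Nat.le_succ K) hk
      have : 1 / (x₁ - x₀) ≤ (k:ℝ) := le_trans hK hKk
      calc (1:ℝ) = (1 / (x₁ - x₀)) * (x₁ - x₀) := by field_simp
        _ ≤ (k:ℝ) * (x₁ - x₀) := by nlinarith
    have hkdc : 0 < (k:ℝ) * (x₁ - x₀) * c := by nlinarith
    have hNnn : (0:ℤ) ≤ ⌊(k:ℝ) * x₁⌋ + 1 - ⌈(k:ℝ) * x₀⌉ := by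
      have h1 : ⌈(k:ℝ) * x₀⌉ ≤ ⌊(k:ℝ) * x₀⌋ + 1 := Int.ceil_le_floor_add_one _
      have h2 : ⌊(k:ℝ) * x₀⌋ ≤ ⌊(k:ℝ) * x₁⌋ := by
        apply Int.floor_le_floor
        nlinarith
      omega
    have hNval : ((⌊(k:ℝ) * x₁⌋ + 1 - ⌈(k:ℝ) * x₀⌉).toNat : ℝ)
        = ((⌊(k:ℝ) * x₁⌋ : ℝ) + 1 - (⌈(k:ℝ) * x₀⌉ : ℝ)) := by
      have := Int.toNat_of_nonneg hNnn
      exact_mod_cast congrArg (fun z : ℤ => (z : ℝ)) this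
    have hfl1 : (k:ℝ) * x₁ - 1 ≤ (⌊(k:ℝ) * x₁⌋ : ℝ) := by
      linarith [Int.sub_one_lt_floor ((k:ℝ) * x₁)]
    have hfl2 : (⌊(k:ℝ) * x₁⌋ : ℝ) ≤ (k:ℝ) * x₁ := Int.floor_le _
    have hce1 : (k:ℝ) * x₀ ≤ (⌈(k:ℝ) * x₀⌉ : ℝ) := Int.le_ceil _
    have hce2 : (⌈(k:ℝ) * x₀⌉ : ℝ) ≤ (k:ℝ) * x₀ + 1 := by
      linarith [Int.ceil_lt_add_one ((k:ℝ) * x₀)]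
    have e1 : (1 / c) * ((k:ℝ) * (x₁ - x₀) * c) = (k:ℝ) * (x₁ - x₀) := by
      field_simp
    have e2 : (2 / ((x₁ - x₀) * c)) * (1 / (k:ℝ)) * ((k:ℝ) * (x₁ - x₀) * c) = 2 := by
      field_simp
    rw [hcount k, helen k, hNval]
    rw [div_le_iff₀ hkdc]
    nlinarith [e1, e2, hfl2, hce1]
end

section
/- Let V_n = ([−n,n] ∩ ℤ)² and ∂V_n = {i ∈ ℤ² ∖ V_n : dist(i, V_n) = 1} its boundary. Let α ∈ (0,1], let π be a closed polygon without self-intersections with area(int π) = 4α, with edges π_1, …, π_R of slopes λ_r ∈ [0,1] (as graphs over the x- or y-axis), and set k(n) = [√(α |V_n| / area(int π))]. Let L_{k(n)} π be the lattice approximation of the blowup B_{k(n)} π. Then lim_{n→∞} |L_{k(n)} π| / |∂V_n| = Σ_{r=1}^{R} (1/√(1 + λ_r²)) · (length π_r / 8). -/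
/-- Slope in `[0,1]` associated with a direction vector (graph over the x- or y-axis). -/
noncomputable def slopeOf (v : ℝ × ℝ) : ℝ := min |v.2 / v.1| |v.1 / v.2|

/-- Lattice approximation of the segment from `u` to `w` (graph over the x-axis if the
segment is closer to horizontal, otherwise graph over the y-axis). -/
noncomputable def segLatticeApprox (u w : ℝ × ℝ) : Set (ℤ × ℤ) :=
  if |w.2 - u.2| ≤ |w.1 - u.1| then
    {p : ℤ × ℤ | min u.1 w.1 ≤ (p.1 : ℝ) ∧ (p.1 : ℝ) ≤ max u.1 w.1 ∧
      p.2 = ⌊(w.2 - u.2) / (w.1 - u.1) * (p.1 : ℝ) + (u.2 - (w.2 - u.2) / (w.1 - u.1) * u.1)⌋}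
  else
    {p : ℤ × ℤ | min u.2 w.2 ≤ (p.2 : ℝ) ∧ (p.2 : ℝ) ≤ max u.2 w.2 ∧
      p.1 = ⌊(w.1 - u.1) / (w.2 - u.2) * (p.2 : ℝ) + (u.1 - (w.1 - u.1) / (w.2 - u.2) * u.2)⌋}

/-- The box `V_n = ([−n,n] ∩ ℤ)²`. -/
def Vbox (n : ℕ) : Set (ℤ × ℤ) := {p | |p.1| ≤ (n : ℤ) ∧ |p.2| ≤ (n : ℤ)}

/-- The boundary `∂V` of `V ⊆ ℤ²`: the sites outside `V` at (Euclidean) distance 1 from `V`. -/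
def latticeBoundary (V : Set (ℤ × ℤ)) : Set (ℤ × ℤ) :=
  {p | p ∉ V ∧ ∃ q ∈ V, (p.1 - q.1) ^ 2 + (p.2 - q.2) ^ 2 = 1}

/-- Area enclosed by the closed polygon with vertices `A 0, …, A R` (shoelace formula). -/
noncomputable def polyArea {R : ℕ} (A : Fin (R + 1) → ℝ × ℝ) : ℝ :=
  |∑ r : Fin R, ((A r.castSucc).1 * (A r.succ).2 - (A r.succ).1 * (A r.castSucc).2)| / 2

/-- Piecewise-linear parametrization of the polygon with vertices `A 0, …, A R` on `[0, R]`. -/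
noncomputable def polyMap {R : ℕ} (A : Fin (R + 1) → ℝ × ℝ) (t : ℝ) : ℝ × ℝ :=
  ∑ r : Fin R,
    if (r : ℝ) ≤ t ∧ t < (r : ℝ) + 1 then
      (1 - (t - (r : ℝ))) • A r.castSucc + (t - (r : ℝ)) • A r.succ
    else 0

/-!
Since `|V_n| = (2n+1)²` and `area(int π) = 4α`, the blow-up factor is exactly `k(n) = n`, while
`|∂V_n| = 8n + 4`. The lattice approximation of the blown-up edge from `n u` to `n w` is a graph
over the axis along which the edge is longer, so it has `n · max(|Δx|, |Δy|) + O(1)` points, and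
`max(|Δx|, |Δy|) = length / √(1 + λ²)`. Because the polygon is simple, the approximations of two
distinct edges share `O(1)` points: lattice approximations of non-parallel lines meet in a window
of bounded width, those of distinct parallel lines drift apart under blow-up, and collinear edges
overlap in at most one point. Hence `|L_n π| = n Σ_r max(|Δx_r|, |Δy_r|) + O(1)`, and dividing by
`8n + 4` gives the limit.
-/

open Filter Topology

lemma Int.sq_add_sq_eq_one_iff {a b : ℤ} :
    a ^ 2 + b ^ 2 = 1 ↔ (a = 0 ∧ (b = 1 ∨ b = -1)) ∨ ((a = 1 ∨ a = -1) ∧ b = 0) := by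
  constructor
  · intro h
    have ha : |a| ≤ 1 := by nlinarith [sq_abs a, abs_nonneg a, sq_nonneg b]
    have hb : |b| ≤ 1 := by nlinarith [sq_abs b, abs_nonneg b, sq_nonneg a]
    obtain ⟨ha₁, ha₂⟩ := abs_le.1 ha
    obtain ⟨hb₁, hb₂⟩ := abs_le.1 hb
    interval_cases a <;> interval_cases b <;> simp_all
  · rintro (⟨rfl, rfl | rfl⟩ | ⟨rfl | rfl, rfl⟩) <;> norm_num

lemma Vbox_eq (n : ℕ) :
    Vbox n = ↑(Finset.Icc (-(n : ℤ)) n ×ˢ Finset.Icc (-(n : ℤ)) n) := by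
  ext ⟨x, y⟩
  simp [Vbox, abs_le, and_and_and_comm]

lemma ncard_Vbox (n : ℕ) : (Vbox n).ncard = (2 * n + 1) ^ 2 := by
  rw [Vbox_eq, Set.ncard_coe_finset, Finset.card_product, Int.card_Icc, sq]
  congr 2 <;> omega

lemma latticeBoundary_Vbox (n : ℕ) :
    latticeBoundary (Vbox n) =
      ↑(({-((n : ℤ) + 1), (n : ℤ) + 1} ×ˢ Finset.Icc (-(n : ℤ)) n) ∪
        (Finset.Icc (-(n : ℤ)) n ×ˢ {-((n : ℤ) + 1), (n : ℤ) + 1})) := by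
  ext ⟨x, y⟩
  simp only [latticeBoundary, Vbox, Set.mem_ofPred_eq, Finset.coe_union, Finset.coe_product,
    Set.mem_union, Set.mem_prod, Finset.mem_coe, Finset.mem_insert, Finset.mem_singleton,
    Finset.mem_Icc, abs_le, Prod.exists, Int.sq_add_sq_eq_one_iff]
  constructor
  · rintro ⟨hout, q₁, q₂, hq, hstep⟩
    omega
  · intro h
    -- the nearest point of the box
    exact ⟨by omega, max (-n) (min n x), max (-n) (min n y), by omega, by omega⟩

lemma ncard_latticeBoundary_Vbox (n : ℕ) : (latticeBoundary (Vbox n)).ncard = 8 * n + 4 := by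
  rw [latticeBoundary_Vbox, Set.ncard_coe_finset, Finset.card_union_of_disjoint]
  · have hpair : ({-((n : ℤ) + 1), (n : ℤ) + 1} : Finset ℤ).card = 2 :=
      Finset.card_pair (by omega)
    simp only [Finset.card_product, hpair, Int.card_Icc]
    omega
  · rw [Finset.disjoint_left]
    rintro ⟨x, y⟩ h₁ h₂
    simp only [Finset.mem_product, Finset.mem_insert, Finset.mem_singleton,
      Finset.mem_Icc] at h₁ h₂
    omega

lemma floor_sqrt_ncard_Vbox_toNat {α : ℝ} (hα : 0 < α) (n : ℕ) :
    ⌊√(α * ((Vbox n).ncard : ℝ) / (4 * α))⌋.toNat = n := by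
  have hsq : α * ((Vbox n).ncard : ℝ) / (4 * α) = (n + 1 / 2) ^ 2 := by
    rw [ncard_Vbox]
    field_simp
    push_cast
    ring
  have hfloor : ⌊(n : ℝ) + 1 / 2⌋ = n := by
    rw [Int.floor_eq_iff]
    constructor <;> push_cast <;> linarith
  rw [hsq, Real.sqrt_sq (by positivity), hfloor, Int.toNat_natCast]

lemma min_abs_div_abs_div_of_abs_le {a b : ℝ} (h : |a| ≤ |b|) :
    min |b / a| |a / b| = |a| / |b| := by
  rw [abs_div, abs_div, min_eq_right]
  rcases (abs_nonneg a).eq_or_lt with ha | ha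
  · simp [← ha]
  · rw [div_le_div_iff₀ (ha.trans_le h) ha]
    exact mul_self_le_mul_self (abs_nonneg a) h

lemma slopeOf_eq_min_div_max (v : ℝ × ℝ) :
    slopeOf v = min |v.1| |v.2| / max |v.1| |v.2| := by
  rcases le_total |v.1| |v.2| with h | h
  · rw [min_eq_left h, max_eq_right h, slopeOf, min_abs_div_abs_div_of_abs_le h]
  · rw [min_eq_right h, max_eq_left h, slopeOf, min_comm, min_abs_div_abs_div_of_abs_le h]

lemma max_abs_sub_pos {u w : ℝ × ℝ} (huw : u ≠ w) : 0 < max |w.1 - u.1| |w.2 - u.2| := by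
  rw [lt_max_iff, abs_pos, abs_pos, sub_ne_zero, sub_ne_zero, ← not_and_or]
  exact fun h => huw (Prod.ext h.1 h.2).symm

lemma one_div_sqrt_one_add_slopeOf_sq_mul_elen {u w : ℝ × ℝ} (huw : u ≠ w) :
    1 / √(1 + slopeOf (w - u) ^ 2) * elen u w = max |w.1 - u.1| |w.2 - u.2| := by
  set a := |w.1 - u.1|
  set b := |w.2 - u.2|
  have hM : 0 < max a b := max_abs_sub_pos huw
  have hsum : (w.1 - u.1) ^ 2 + (w.2 - u.2) ^ 2 = max a b ^ 2 + min a b ^ 2 := by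
    rw [← sq_abs (w.1 - u.1), ← sq_abs (w.2 - u.2)]
    rcases le_total a b with h | h
    · rw [max_eq_right h, min_eq_left h, add_comm]
    · rw [max_eq_left h, min_eq_right h]
  have hone : 1 + (min a b / max a b) ^ 2 = (max a b ^ 2 + min a b ^ 2) / max a b ^ 2 := by
    field_simp
  have hroot : 0 < √(max a b ^ 2 + min a b ^ 2) := Real.sqrt_pos.2 (by positivity)
  rw [slopeOf_eq_min_div_max, elen, Prod.fst_sub, Prod.snd_sub, hone, hsum,
    Real.sqrt_div' _ (sq_nonneg _), Real.sqrt_sq hM.le]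
  field_simp

def latticeGraph (a b : ℝ) (f : ℤ → ℤ) : Set (ℤ × ℤ) :=
  {p | a ≤ p.1 ∧ p.1 ≤ b ∧ p.2 = f p.1}

section latticeGraph

variable {a b : ℝ} {f : ℤ → ℤ}

lemma latticeGraph_eq_image :
    latticeGraph a b f = ↑((Finset.Icc ⌈a⌉ ⌊b⌋).image fun x => (x, f x)) := by
  ext ⟨x, y⟩
  simp [latticeGraph, Int.ceil_le, Int.le_floor, and_assoc, eq_comm]

lemma latticeGraph_finite : (latticeGraph a b f).Finite := by
  rw [latticeGraph_eq_image]
  exact Finset.finite_toSet _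

lemma ncard_latticeGraph :
    ((latticeGraph a b f).ncard : ℝ) = max (((⌊b⌋ + 1 - ⌈a⌉ : ℤ)) : ℝ) 0 := by
  rw [latticeGraph_eq_image, Set.ncard_coe_finset,
    Finset.card_image_of_injective _ fun x y h => (Prod.mk.inj h).1, Int.card_Icc]
  exact_mod_cast Int.toNat_eq_max _

lemma ncard_latticeGraph_le : ((latticeGraph a b f).ncard : ℝ) ≤ max (b - a) 0 + 1 := by
  rw [ncard_latticeGraph]
  have : ((⌊b⌋ + 1 - ⌈a⌉ : ℤ) : ℝ) ≤ b - a + 1 := by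
    push_cast
    linarith [Int.floor_le b, Int.le_ceil a]
  exact max_le (by linarith [le_max_left (b - a) 0]) (by positivity)

lemma sub_sub_one_le_ncard_latticeGraph : b - a - 1 ≤ (latticeGraph a b f).ncard := by
  rw [ncard_latticeGraph]
  refine le_trans ?_ (le_max_left _ _)
  push_cast
  linarith [Int.sub_one_lt_floor b, Int.ceil_lt_add_one a]

lemma abs_ncard_latticeGraph_sub_le (h : a ≤ b) :
    |((latticeGraph a b f).ncard : ℝ) - (b - a)| ≤ 1 := by
  have := ncard_latticeGraph_le (a := a) (b := b) (f := f)
  rw [max_eq_left (sub_nonneg.2 h)] at this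
  rw [abs_le]
  constructor <;> linarith [sub_sub_one_le_ncard_latticeGraph (a := a) (b := b) (f := f)]

lemma ncard_le_of_subset_latticeGraph {S : Set (ℤ × ℤ)} (hS : S ⊆ latticeGraph a b f) :
    (S.ncard : ℝ) ≤ max (b - a) 0 + 1 :=
  (Nat.cast_le.2 (Set.ncard_le_ncard hS latticeGraph_finite)).trans ncard_latticeGraph_le

end latticeGraph

lemma ncard_le_of_abs_mul_sub_le {S : Set (ℤ × ℤ)} {f : ℤ → ℤ} {k d e : ℝ} (hk : k ≠ 0)
    (he : 0 ≤ e) (hS : ∀ p ∈ S, p.2 = f p.1 ∧ |k * p.1 - d| ≤ e) :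
    (S.ncard : ℝ) ≤ 2 * e / |k| + 1 := by
  have hk' : 0 < |k| := abs_pos.2 hk
  have hsub : S ⊆ latticeGraph (d / k - e / |k|) (d / k + e / |k|) f := by
    intro p hp
    obtain ⟨hgraph, hline⟩ := hS p hp
    have hdist : |(p.1 : ℝ) - d / k| ≤ e / |k| := by
      rw [le_div_iff₀ hk', ← abs_mul, sub_mul, div_mul_cancel₀ _ hk, mul_comm]
      exact hline
    exact ⟨by linarith [(abs_le.1 hdist).1], by linarith [(abs_le.1 hdist).2], hgraph⟩
  refine (ncard_le_of_subset_latticeGraph hsub).trans (le_of_eq ?_)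
  rw [max_eq_left (by have : (0 : ℝ) ≤ e / |k| := div_nonneg he hk'.le; linarith)]
  ring

lemma abs_sub_floor_lt_one (t : ℝ) : |t - ⌊t⌋| < 1 := by
  rw [Int.self_sub_floor, Int.abs_fract]
  exact Int.fract_lt_one t

def lineApprox (a b l c : ℝ) : Set (ℤ × ℤ) :=
  latticeGraph a b fun x => ⌊l * x + c⌋

lemma ncard_lineApprox_inter_le_of_ne {l₁ l₂ : ℝ} (hl : l₁ ≠ l₂) (a₁ b₁ c₁ a₂ b₂ c₂ : ℝ) :
    ((lineApprox a₁ b₁ l₁ c₁ ∩ lineApprox a₂ b₂ l₂ c₂).ncard : ℝ) ≤ 2 / |l₁ - l₂| + 1 := by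
  have := ncard_le_of_abs_mul_sub_le (S := lineApprox a₁ b₁ l₁ c₁ ∩ lineApprox a₂ b₂ l₂ c₂)
    (f := fun x => ⌊l₁ * x + c₁⌋) (d := c₂ - c₁) (sub_ne_zero.2 hl) zero_le_one
    fun p ⟨⟨_, _, h₁⟩, ⟨_, _, h₂⟩⟩ => ⟨h₁, by
      have := (Int.abs_sub_lt_one_of_floor_eq_floor (h₁.symm.trans h₂)).le
      rwa [show l₁ * p.1 + c₁ - (l₂ * p.1 + c₂) = (l₁ - l₂) * p.1 - (c₂ - c₁) by ring] at this⟩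
  simpa using this

lemma lineApprox_inter_eq_empty {l c₁ c₂ : ℝ} (hc : 1 ≤ |c₁ - c₂|) (a₁ b₁ a₂ b₂ : ℝ) :
    lineApprox a₁ b₁ l c₁ ∩ lineApprox a₂ b₂ l c₂ = ∅ := by
  refine Set.eq_empty_of_forall_notMem fun p ⟨⟨_, _, h₁⟩, ⟨_, _, h₂⟩⟩ => ?_
  have := Int.abs_sub_lt_one_of_floor_eq_floor (h₁.symm.trans h₂)
  rw [add_sub_add_left_eq_sub] at this
  linarith

lemma lineApprox_inter_subset (a₁ b₁ a₂ b₂ l c : ℝ) :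
    lineApprox a₁ b₁ l c ∩ lineApprox a₂ b₂ l c ⊆ lineApprox (max a₁ a₂) (min b₁ b₂) l c :=
  fun _ ⟨⟨ha₁, hb₁, h⟩, ⟨ha₂, hb₂, _⟩⟩ => ⟨max_le ha₁ ha₂, le_min hb₁ hb₂, h⟩

-- `m * l ≠ 1` says that the lines `y = l x + c₁` and `x = m y + c₂` are not parallel.
lemma ncard_lineApprox_inter_swap_le {l m : ℝ} (h : m * l ≠ 1) (a₁ b₁ c₁ a₂ b₂ c₂ : ℝ) :
    ((lineApprox a₁ b₁ l c₁ ∩ Prod.swap ⁻¹' lineApprox a₂ b₂ m c₂).ncard : ℝ) ≤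
      2 * (1 + |m|) / |1 - m * l| + 1 := by
  refine ncard_le_of_abs_mul_sub_le (f := fun x => ⌊l * x + c₁⌋) (d := m * c₁ + c₂)
    (sub_ne_zero.2 h.symm) (by positivity)
    fun ⟨x, y⟩ ⟨⟨_, _, h₁⟩, ⟨_, _, h₂⟩⟩ => ⟨h₁, ?_⟩
  simp only [Prod.fst_swap, Prod.snd_swap] at h₁ h₂ ⊢
  have e₁ : |(y : ℝ) - (l * x + c₁)| ≤ 1 := by
    rw [h₁, abs_sub_comm]; exact (abs_sub_floor_lt_one _).le
  have e₂ : |m * y + c₂ - x| ≤ 1 := by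
    rw [h₂]; exact (abs_sub_floor_lt_one _).le
  -- eliminate `y` from the two equations `y ≈ l x + c₁`, `x ≈ m y + c₂`
  calc |(1 - m * l) * x - (m * c₁ + c₂)|
      = |m * (y - (l * x + c₁)) - (m * y + c₂ - x)| := by ring_nf
    _ ≤ |m| * |y - (l * x + c₁)| + |m * y + c₂ - x| := by
      rw [← abs_mul]; exact abs_sub _ _
    _ ≤ |m| * 1 + 1 := by gcongr
    _ = 1 + |m| := by ring

lemma ncard_preimage_swap {α β : Type*} (S : Set (α × β)) : (Prod.swap ⁻¹' S).ncard = S.ncard :=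
  Set.ncard_preimage_of_injective_subset_range Prod.swap_injective
    (by rw [Prod.swap_surjective.range_eq]; exact Set.subset_univ S)

noncomputable def lineSlope (u w : ℝ × ℝ) : ℝ := (w.2 - u.2) / (w.1 - u.1)

noncomputable def lineIntercept (u w : ℝ × ℝ) : ℝ := u.2 - lineSlope u w * u.1

def graphApprox (u w : ℝ × ℝ) : Set (ℤ × ℤ) :=
  lineApprox (min u.1 w.1) (max u.1 w.1) (lineSlope u w) (lineIntercept u w)

lemma graphApprox_finite (u w : ℝ × ℝ) : (graphApprox u w).Finite := by
  unfold graphApprox lineApprox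
  exact latticeGraph_finite

lemma segLatticeApprox_eq_ite (u w : ℝ × ℝ) :
    segLatticeApprox u w = if |w.2 - u.2| ≤ |w.1 - u.1| then graphApprox u w
      else Prod.swap ⁻¹' graphApprox u.swap w.swap :=
  rfl

lemma segLatticeApprox_finite (u w : ℝ × ℝ) : (segLatticeApprox u w).Finite := by
  rw [segLatticeApprox_eq_ite]
  split_ifs
  · exact graphApprox_finite u w
  · exact (graphApprox_finite _ _).preimage Prod.swap_injective.injOn

lemma fst_ne_of_abs_sub_le {u w : ℝ × ℝ} (huw : u ≠ w) (h : |w.2 - u.2| ≤ |w.1 - u.1|) :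
    u.1 ≠ w.1 := by
  intro h₁
  rw [h₁, sub_self, abs_zero, abs_nonpos_iff, sub_eq_zero] at h
  exact huw (Prod.ext h₁ h.symm)

lemma abs_lineSlope_le_one {u w : ℝ × ℝ} (h : |w.2 - u.2| ≤ |w.1 - u.1|) :
    |lineSlope u w| ≤ 1 := by
  rw [lineSlope, abs_div]
  exact div_le_one_of_le₀ h (abs_nonneg _)

lemma abs_lineSlope_swap_lt_one {u w : ℝ × ℝ} (h : |w.1 - u.1| < |w.2 - u.2|) :
    |lineSlope u.swap w.swap| < 1 := by
  rw [lineSlope, abs_div]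
  exact (div_lt_one ((abs_nonneg _).trans_lt h)).2 h

lemma graphApprox_smul {c : ℝ} (hc : 0 < c) (u w : ℝ × ℝ) :
    graphApprox (c • u) (c • w) =
      lineApprox (c * min u.1 w.1) (c * max u.1 w.1) (lineSlope u w) (c * lineIntercept u w) := by
  have hslope : lineSlope (c • u) (c • w) = lineSlope u w := by
    simp only [lineSlope, Prod.smul_fst, Prod.smul_snd, smul_eq_mul, ← mul_sub,
      mul_div_mul_left _ _ hc.ne']
  have hintercept : lineIntercept (c • u) (c • w) = c * lineIntercept u w := by
    simp only [lineIntercept, hslope, Prod.smul_fst, Prod.smul_snd, smul_eq_mul]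
    ring
  rw [graphApprox, hslope, hintercept, mul_min_of_nonneg _ _ hc.le, mul_max_of_nonneg _ _ hc.le]
  rfl

lemma segLatticeApprox_smul {c : ℝ} (hc : 0 < c) (u w : ℝ × ℝ) :
    segLatticeApprox (c • u) (c • w) =
      if |w.2 - u.2| ≤ |w.1 - u.1| then graphApprox (c • u) (c • w)
      else Prod.swap ⁻¹' graphApprox (c • u.swap) (c • w.swap) := by
  simp only [segLatticeApprox_eq_ite, Prod.smul_swap, Prod.smul_fst, Prod.smul_snd, smul_eq_mul,
    ← mul_sub, abs_mul, abs_of_pos hc, mul_le_mul_iff_right₀ hc]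

lemma abs_ncard_graphApprox_smul_sub_le {c : ℝ} (hc : 0 < c) (u w : ℝ × ℝ) :
    |((graphApprox (c • u) (c • w)).ncard : ℝ) - (c * |w.1 - u.1|)| ≤ 1 := by
  rw [graphApprox_smul hc, lineApprox]
  have := abs_ncard_latticeGraph_sub_le (a := c * min u.1 w.1) (b := c * max u.1 w.1)
    (f := fun x => ⌊lineSlope u w * x + c * lineIntercept u w⌋)
    (mul_le_mul_of_nonneg_left min_le_max hc.le)
  rwa [← mul_sub, max_sub_min_eq_abs] at this

lemma abs_ncard_segLatticeApprox_smul_sub_le {c : ℝ} (hc : 0 < c) (u w : ℝ × ℝ) :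
    |((segLatticeApprox (c • u) (c • w)).ncard : ℝ) - (c * max |w.1 - u.1| |w.2 - u.2|)| ≤ 1 := by
  rw [segLatticeApprox_smul hc]
  split_ifs with h
  · rw [max_eq_left h]
    exact abs_ncard_graphApprox_smul_sub_le hc u w
  · rw [max_eq_right (not_le.1 h).le, ncard_preimage_swap]
    exact abs_ncard_graphApprox_smul_sub_le hc u.swap w.swap

lemma mk_mem_openSegment {u w : ℝ × ℝ} (h : u.1 ≠ w.1) {x : ℝ}
    (hx : x ∈ Set.Ioo (min u.1 w.1) (max u.1 w.1)) :
    (x, lineSlope u w * x + lineIntercept u w) ∈ openSegment ℝ u w := by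
  rw [← openSegment_eq_Ioo' h, openSegment_eq_image] at hx
  obtain ⟨θ, hθ, rfl⟩ := hx
  rw [openSegment_eq_image]
  refine ⟨θ, hθ, Prod.ext rfl ?_⟩
  have : w.1 - u.1 ≠ 0 := sub_ne_zero.2 h.symm
  simp only [lineIntercept, lineSlope, Prod.smul_snd, smul_eq_mul, Prod.snd_add]
  field_simp
  ring

-- The `x`-projections of two collinear segments with disjoint interiors share at most a point.
lemma min_max_le_max_min_of_disjoint {u₁ w₁ u₂ w₂ : ℝ × ℝ} (h₁ : u₁.1 ≠ w₁.1) (h₂ : u₂.1 ≠ w₂.1)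
    (hslope : lineSlope u₁ w₁ = lineSlope u₂ w₂)
    (hintercept : lineIntercept u₁ w₁ = lineIntercept u₂ w₂)
    (hdisj : Disjoint (openSegment ℝ u₁ w₁) (openSegment ℝ u₂ w₂)) :
    min (max u₁.1 w₁.1) (max u₂.1 w₂.1) ≤ max (min u₁.1 w₁.1) (min u₂.1 w₂.1) := by
  by_contra! hlt
  obtain ⟨x, hx₁, hx₂⟩ := exists_between hlt
  rw [max_lt_iff] at hx₁
  rw [lt_min_iff] at hx₂
  refine Set.disjoint_left.1 hdisj (mk_mem_openSegment h₁ ⟨hx₁.1, hx₂.1⟩) ?_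
  rw [hslope, hintercept]
  exact mk_mem_openSegment h₂ ⟨hx₁.2, hx₂.2⟩

lemma disjoint_openSegment_swap {u₁ w₁ u₂ w₂ : ℝ × ℝ}
    (hdisj : Disjoint (openSegment ℝ u₁ w₁) (openSegment ℝ u₂ w₂)) :
    Disjoint (openSegment ℝ u₁.swap w₁.swap) (openSegment ℝ u₂.swap w₂.swap) := by
  have h := image_openSegment ℝ (LinearEquiv.prodComm ℝ ℝ ℝ).toLinearMap.toAffineMap
  exact h u₁ w₁ ▸ h u₂ w₂ ▸ (Set.disjoint_image_iff Prod.swap_injective).2 hdisj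

lemma exists_eventually_ncard_graphApprox_inter_le {u₁ w₁ u₂ w₂ : ℝ × ℝ} (h₁ : u₁.1 ≠ w₁.1)
    (h₂ : u₂.1 ≠ w₂.1) (hdisj : Disjoint (openSegment ℝ u₁ w₁) (openSegment ℝ u₂ w₂)) :
    ∃ C : ℝ, ∀ᶠ n : ℕ in atTop,
      ((graphApprox ((n : ℝ) • u₁) ((n : ℝ) • w₁) ∩
        graphApprox ((n : ℝ) • u₂) ((n : ℝ) • w₂)).ncard : ℝ) ≤ C := by
  have hpos : ∀ᶠ n : ℕ in atTop, (0 : ℝ) < n := by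
    filter_upwards [eventually_gt_atTop 0] with n hn using Nat.cast_pos.2 hn
  rcases ne_or_eq (lineSlope u₁ w₁) (lineSlope u₂ w₂) with hslope | hslope
  · refine ⟨2 / |lineSlope u₁ w₁ - lineSlope u₂ w₂| + 1, ?_⟩
    filter_upwards [hpos] with n hn
    rw [graphApprox_smul hn, graphApprox_smul hn]
    exact ncard_lineApprox_inter_le_of_ne hslope _ _ _ _ _ _
  rcases ne_or_eq (lineIntercept u₁ w₁) (lineIntercept u₂ w₂) with hint | hint
  · -- parallel lines drift apart under scaling
    refine ⟨0, ?_⟩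
    have hgap := abs_pos.2 (sub_ne_zero.2 hint)
    filter_upwards [hpos, tendsto_natCast_atTop_atTop.eventually_ge_atTop
      (1 / |lineIntercept u₁ w₁ - lineIntercept u₂ w₂|)] with n hn hlarge
    rw [graphApprox_smul hn, graphApprox_smul hn, hslope, lineApprox_inter_eq_empty,
      Set.ncard_empty, Nat.cast_zero]
    rw [← mul_sub, abs_mul, abs_of_pos hn, ← div_le_iff₀ hgap]
    exact hlarge
  · refine ⟨1, ?_⟩
    filter_upwards [hpos] with n hn
    rw [graphApprox_smul hn, graphApprox_smul hn, hslope, hint]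
    refine (ncard_le_of_subset_latticeGraph (lineApprox_inter_subset _ _ _ _ _ _)).trans ?_
    have := min_max_le_max_min_of_disjoint h₁ h₂ hslope hint hdisj
    rw [← mul_max_of_nonneg _ _ hn.le, ← mul_min_of_nonneg _ _ hn.le, ← mul_sub,
      max_eq_right (mul_nonpos_of_nonneg_of_nonpos hn.le (by linarith)), zero_add]

lemma exists_ncard_graphApprox_inter_swap_le {u₁ w₁ u₂ w₂ : ℝ × ℝ}
    (h₁ : |w₁.2 - u₁.2| ≤ |w₁.1 - u₁.1|) (h₂ : |w₂.1 - u₂.1| < |w₂.2 - u₂.2|) :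
    ∃ C : ℝ, ∀ c : ℝ, 0 < c →
      ((graphApprox (c • u₁) (c • w₁) ∩
        Prod.swap ⁻¹' graphApprox (c • u₂.swap) (c • w₂.swap)).ncard : ℝ) ≤ C := by
  set l := lineSlope u₁ w₁
  set m := lineSlope u₂.swap w₂.swap
  have hml : m * l ≠ 1 := by
    have : |m * l| < 1 := by
      rw [abs_mul]
      exact mul_lt_one_of_nonneg_of_lt_one_left (abs_nonneg _) (abs_lineSlope_swap_lt_one h₂)
        (abs_lineSlope_le_one h₁)
    exact fun h => by simp [h] at this
  refine ⟨2 * (1 + |m|) / |1 - m * l| + 1, fun c hc => ?_⟩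
  rw [graphApprox_smul hc, graphApprox_smul hc]
  exact ncard_lineApprox_inter_swap_le hml _ _ _ _ _ _

lemma exists_eventually_ncard_segLatticeApprox_inter_le {u₁ w₁ u₂ w₂ : ℝ × ℝ} (h₁ : u₁ ≠ w₁)
    (h₂ : u₂ ≠ w₂) (hdisj : Disjoint (openSegment ℝ u₁ w₁) (openSegment ℝ u₂ w₂)) :
    ∃ C : ℝ, ∀ᶠ n : ℕ in atTop,
      ((segLatticeApprox ((n : ℝ) • u₁) ((n : ℝ) • w₁) ∩
        segLatticeApprox ((n : ℝ) • u₂) ((n : ℝ) • w₂)).ncard : ℝ) ≤ C := by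
  have hpos : ∀ᶠ n : ℕ in atTop, (0 : ℝ) < n := by
    filter_upwards [eventually_gt_atTop 0] with n hn using Nat.cast_pos.2 hn
  by_cases hx₁ : |w₁.2 - u₁.2| ≤ |w₁.1 - u₁.1| <;> by_cases hx₂ : |w₂.2 - u₂.2| ≤ |w₂.1 - u₂.1|
  · obtain ⟨C, hC⟩ := exists_eventually_ncard_graphApprox_inter_le
      (fst_ne_of_abs_sub_le h₁ hx₁) (fst_ne_of_abs_sub_le h₂ hx₂) hdisj
    refine ⟨C, ?_⟩
    filter_upwards [hC, hpos] with n hn hn₀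
    rwa [segLatticeApprox_smul hn₀, segLatticeApprox_smul hn₀, if_pos hx₁, if_pos hx₂]
  · obtain ⟨C, hC⟩ := exists_ncard_graphApprox_inter_swap_le hx₁ (not_le.1 hx₂)
    refine ⟨C, ?_⟩
    filter_upwards [hpos] with n hn₀
    rw [segLatticeApprox_smul hn₀, segLatticeApprox_smul hn₀, if_pos hx₁, if_neg hx₂]
    exact hC n hn₀
  · obtain ⟨C, hC⟩ := exists_ncard_graphApprox_inter_swap_le hx₂ (not_le.1 hx₁)
    refine ⟨C, ?_⟩
    filter_upwards [hpos] with n hn₀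
    rw [segLatticeApprox_smul hn₀, segLatticeApprox_smul hn₀, if_neg hx₁, if_pos hx₂,
      Set.inter_comm]
    exact hC n hn₀
  · obtain ⟨C, hC⟩ := exists_eventually_ncard_graphApprox_inter_le
      (fst_ne_of_abs_sub_le (Prod.swap_injective.ne h₁) (not_le.1 hx₁).le)
      (fst_ne_of_abs_sub_le (Prod.swap_injective.ne h₂) (not_le.1 hx₂).le)
      (disjoint_openSegment_swap hdisj)
    refine ⟨C, ?_⟩
    filter_upwards [hC, hpos] with n hn hn₀
    rwa [segLatticeApprox_smul hn₀, segLatticeApprox_smul hn₀, if_neg hx₁, if_neg hx₂,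
      ← Set.preimage_inter, ncard_preimage_swap]

lemma Finset.sum_ncard_le_ncard_biUnion_add {ι α : Type*} [DecidableEq ι] {S : ι → Set α}
    (hS : ∀ i, (S i).Finite) {K : ℕ} (hK : ∀ i j, i ≠ j → (S i ∩ S j).ncard ≤ K)
    (t : Finset ι) :
    ∑ i ∈ t, (S i).ncard ≤ (⋃ i ∈ t, S i).ncard + t.card ^ 2 * K := by
  induction t using Finset.induction_on with
  | empty => simp
  | @insert a t ha ih =>
    have hU : (⋃ i ∈ t, S i).Finite := t.finite_toSet.biUnion fun i _ => hS i
    have hinter : (S a ∩ ⋃ i ∈ t, S i).ncard ≤ t.card * K := by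
      rw [Set.inter_iUnion₂]
      refine (t.set_ncard_biUnion_le _).trans ?_
      exact Finset.sum_le_card_nsmul _ _ _ fun i hi => hK a i (ne_of_mem_of_not_mem hi ha).symm
    have hunion := Set.ncard_union_add_ncard_inter (S a) (⋃ i ∈ t, S i) (hS a) hU
    rw [Finset.sum_insert ha, Finset.set_biUnion_insert, Finset.card_insert_of_notMem ha]
    nlinarith

lemma abs_ncard_iUnion_sub_sum_le {ι α : Type*} [Fintype ι] {S : ι → Set α}
    (hS : ∀ i, (S i).Finite) {a : ι → ℝ} (ha : ∀ i, |((S i).ncard : ℝ) - a i| ≤ 1) {K : ℕ}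
    (hK : ∀ i j, i ≠ j → (S i ∩ S j).ncard ≤ K) :
    |((⋃ i, S i).ncard : ℝ) - ∑ i, a i| ≤ Fintype.card ι ^ 2 * K + Fintype.card ι := by
  classical
  have hsum : |∑ i, ((S i).ncard : ℝ) - ∑ i, a i| ≤ Fintype.card ι := by
    rw [← Finset.sum_sub_distrib]
    refine (Finset.abs_sum_le_sum_abs _ _).trans ?_
    simpa using Finset.sum_le_card_nsmul Finset.univ _ 1 fun i _ => ha i
  have hlower : ∑ i, ((S i).ncard : ℝ) ≤ (⋃ i, S i).ncard + Fintype.card ι ^ 2 * K := by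
    exact_mod_cast by simpa using Finset.univ.sum_ncard_le_ncard_biUnion_add hS hK
  have hupper : ((⋃ i, S i).ncard : ℝ) ≤ ∑ i, ((S i).ncard : ℝ) := by
    exact_mod_cast Set.ncard_iUnion_le_of_fintype S
  rw [abs_le] at hsum ⊢
  constructor <;> linarith [hsum.1, hsum.2]

lemma tendsto_mul_add_div_eight_mul_add_four (a b : ℝ) :
    Tendsto (fun n : ℕ => (n * a + b) / (8 * n + 4)) atTop (𝓝 (a / 8)) := by
  have heq : (fun n : ℕ => (a + b / n) / (8 + 4 / n)) =ᶠ[atTop]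
      fun n : ℕ => (n * a + b) / (8 * n + 4) := by
    filter_upwards [eventually_ne_atTop 0] with n hn
    field_simp
  refine Tendsto.congr' heq ?_
  have := ((tendsto_const_div_atTop_nhds_zero_nat b).const_add a).div
    ((tendsto_const_div_atTop_nhds_zero_nat 4).const_add 8) (by norm_num)
  rw [add_zero, add_zero] at this
  exact this

lemma tendsto_div_eight_mul_add_four {u : ℕ → ℝ} {a C : ℝ}
    (h : ∀ᶠ n in atTop, |u n - n * a| ≤ C) :
    Tendsto (fun n => u n / (8 * n + 4)) atTop (𝓝 (a / 8)) := by
  refine tendsto_of_tendsto_of_tendsto_of_le_of_le'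
    (tendsto_mul_add_div_eight_mul_add_four a (-C)) (tendsto_mul_add_div_eight_mul_add_four a C)
    ?_ ?_ <;>
  filter_upwards [h] with n hn <;>
  gcongr <;> linarith [(abs_le.1 hn).1, (abs_le.1 hn).2]

lemma floor_natCast_add_of_mem_Ico (r : ℕ) {t : ℝ} (ht : t ∈ Set.Ico (0 : ℝ) 1) :
    ⌊(r : ℝ) + t⌋₊ = r := by
  rw [add_comm, Nat.floor_add_natCast ht.1, Nat.floor_eq_zero.2 ht.2, zero_add]

section polygon

variable {R : ℕ} {A : Fin (R + 1) → ℝ × ℝ}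

lemma polyMap_natCast_add (r : Fin R) {t : ℝ} (ht : t ∈ Set.Ico (0 : ℝ) 1) :
    polyMap A (r + t) = (1 - t) • A r.castSucc + t • A r.succ := by
  rw [polyMap, Finset.sum_eq_single r]
  · rw [if_pos ⟨by linarith [ht.1], by linarith [ht.2]⟩, add_sub_cancel_left]
  · rintro s - hsr
    refine if_neg fun hs => hsr (Fin.ext ?_)
    rw [← Nat.floor_eq_iff (by linarith [ht.1, r.val.cast_nonneg (α := ℝ)])] at hs
    exact hs.symm.trans (floor_natCast_add_of_mem_Ico r ht)
  · exact fun h => absurd (Finset.mem_univ r) h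

lemma disjoint_openSegment_of_injOn_polyMap
    (hsimple : Set.InjOn (polyMap A) (Set.Ico (0 : ℝ) (R : ℝ))) {r s : Fin R} (hrs : r ≠ s) :
    Disjoint (openSegment ℝ (A r.castSucc) (A r.succ))
      (openSegment ℝ (A s.castSucc) (A s.succ)) := by
  rw [Set.disjoint_left]
  intro z hr hs
  rw [openSegment_eq_image] at hr hs
  obtain ⟨t, ht, rfl⟩ := hr
  obtain ⟨t', ht', hzt'⟩ := hs
  have hmem (q : Fin R) {τ : ℝ} (hτ : τ ∈ Set.Ioo (0 : ℝ) 1) :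
      (q : ℝ) + τ ∈ Set.Ico (0 : ℝ) R := by
    have : ((q : ℕ) : ℝ) + 1 ≤ R := by exact_mod_cast q.isLt
    exact ⟨by linarith [hτ.1, (q : ℕ).cast_nonneg (α := ℝ)], by linarith [hτ.2]⟩
  have heq := hsimple (hmem s ht') (hmem r ht) (by
    rw [polyMap_natCast_add s (Set.Ioo_subset_Ico_self ht'),
      polyMap_natCast_add r (Set.Ioo_subset_Ico_self ht)]
    exact hzt')
  have := congrArg Nat.floor heq
  rw [floor_natCast_add_of_mem_Ico _ (Set.Ioo_subset_Ico_self ht'),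
    floor_natCast_add_of_mem_Ico _ (Set.Ioo_subset_Ico_self ht)] at this
  exact hrs (Fin.ext this).symm

lemma exists_eventually_ncard_edge_inter_le (hedge : ∀ r : Fin R, A r.castSucc ≠ A r.succ)
    (hsimple : Set.InjOn (polyMap A) (Set.Ico (0 : ℝ) (R : ℝ))) :
    ∃ K : ℕ, ∀ᶠ n : ℕ in atTop, ∀ r s : Fin R, r ≠ s →
      (segLatticeApprox ((n : ℝ) • A r.castSucc) ((n : ℝ) • A r.succ) ∩
        segLatticeApprox ((n : ℝ) • A s.castSucc) ((n : ℝ) • A s.succ)).ncard ≤ K := by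
  have hpair (p : Fin R × Fin R) : ∃ C : ℝ, ∀ᶠ n : ℕ in atTop, p.1 ≠ p.2 →
      ((segLatticeApprox ((n : ℝ) • A p.1.castSucc) ((n : ℝ) • A p.1.succ) ∩
        segLatticeApprox ((n : ℝ) • A p.2.castSucc) ((n : ℝ) • A p.2.succ)).ncard : ℝ) ≤ C := by
    by_cases hp : p.1 = p.2
    · exact ⟨0, Eventually.of_forall fun _ h => absurd hp h⟩
    · obtain ⟨C, hC⟩ := exists_eventually_ncard_segLatticeApprox_inter_le (hedge p.1) (hedge p.2)
        (disjoint_openSegment_of_injOn_polyMap hsimple hp)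
      exact ⟨C, hC.mono fun _ h _ => h⟩
  choose C hC using hpair
  obtain ⟨B, hB⟩ := (Set.finite_range C).bddAbove
  refine ⟨⌈B⌉₊, (eventually_all.2 hC).mono fun n hn r s hrs => ?_⟩
  exact_mod_cast (hn (r, s) hrs).trans ((hB ⟨_, rfl⟩).trans (Nat.le_ceil B))

end polygon

theorem polygon_latticeApprox_card_div_boundary_card_general (alpha : ℝ)
    (halpha : alpha ∈ Set.Ioc (0 : ℝ) 1) (R : ℕ)
    (A : Fin (R + 1) → ℝ × ℝ)
    (hedge : ∀ r : Fin R, A r.castSucc ≠ A r.succ)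
    (hsimple : Set.InjOn (polyMap A) (Set.Ico (0 : ℝ) (R : ℝ)))
    (harea : polyArea A = 4 * alpha) :
    Filter.Tendsto
      (fun n : ℕ =>
        ((⋃ r : Fin R,
            segLatticeApprox
              (((⌊Real.sqrt (alpha * ((Vbox n).ncard : ℝ) / polyArea A)⌋.toNat : ℕ) : ℝ) •
                A r.castSucc)
              (((⌊Real.sqrt (alpha * ((Vbox n).ncard : ℝ) / polyArea A)⌋.toNat : ℕ) : ℝ) •
                A r.succ)).ncard : ℝ) /
          ((latticeBoundary (Vbox n)).ncard : ℝ))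
      Filter.atTop
      (nhds (∑ r : Fin R,
        (1 / Real.sqrt (1 + slopeOf (A r.succ - A r.castSucc) ^ 2)) *
          (elen (A r.castSucc) (A r.succ) / 8))) := by
  have hlimit : ∑ r : Fin R, 1 / √(1 + slopeOf (A r.succ - A r.castSucc) ^ 2) *
      (elen (A r.castSucc) (A r.succ) / 8) =
      (∑ r : Fin R,
        max |(A r.succ).1 - (A r.castSucc).1| |(A r.succ).2 - (A r.castSucc).2|) / 8 := by
    rw [Finset.sum_div]
    refine Finset.sum_congr rfl fun r _ => ?_
    rw [← one_div_sqrt_one_add_slopeOf_sq_mul_elen (hedge r), mul_div_assoc]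
  simp only [harea, floor_sqrt_ncard_Vbox_toNat halpha.1, ncard_latticeBoundary_Vbox, hlimit,
    Nat.cast_add, Nat.cast_mul, Nat.cast_ofNat]
  obtain ⟨K, hK⟩ := exists_eventually_ncard_edge_inter_le hedge hsimple
  refine tendsto_div_eight_mul_add_four
    (C := Fintype.card (Fin R) ^ 2 * K + Fintype.card (Fin R)) ?_
  filter_upwards [hK, eventually_gt_atTop 0] with n hKn hn
  rw [Finset.mul_sum]
  exact abs_ncard_iUnion_sub_sum_le (fun r => segLatticeApprox_finite _ _)
    (fun r => abs_ncard_segLatticeApprox_smul_sub_le (Nat.cast_pos.2 hn) _ _) hKn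

theorem polygon_latticeApprox_card_div_boundary_card (alpha : ℝ)
    (halpha : alpha ∈ Set.Ioc (0 : ℝ) 1) (R : ℕ) (hR : 0 < R)
    (A : Fin (R + 1) → ℝ × ℝ) (hclosed : A (Fin.last R) = A 0)
    (hedge : ∀ r : Fin R, A r.castSucc ≠ A r.succ)
    (hsimple : Set.InjOn (polyMap A) (Set.Ico (0 : ℝ) (R : ℝ)))
    (harea : polyArea A = 4 * alpha) :
    Filter.Tendsto
      (fun n : ℕ =>
        ((⋃ r : Fin R,
            segLatticeApprox
              (((⌊Real.sqrt (alpha * ((Vbox n).ncard : ℝ) / polyArea A)⌋.toNat : ℕ) : ℝ) •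
                A r.castSucc)
              (((⌊Real.sqrt (alpha * ((Vbox n).ncard : ℝ) / polyArea A)⌋.toNat : ℕ) : ℝ) •
                A r.succ)).ncard : ℝ) /
          ((latticeBoundary (Vbox n)).ncard : ℝ))
      Filter.atTop
      (nhds (∑ r : Fin R,
        (1 / Real.sqrt (1 + slopeOf (A r.succ - A r.castSucc) ^ 2)) *
          (elen (A r.castSucc) (A r.succ) / 8))) :=
  polygon_latticeApprox_card_div_boundary_card_general alpha halpha R A hedge hsimple harea
end
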